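/- Let φ = (φ_i)_{i≥1} be a sequence of real numbers with φ_i ≥ 0 for all i, let 1 ≤ l ≤ n, and let M be a real number with M ≠ 0 and M > −φ_l. If M > 0, then the set of negative zeros of Be_n^{φ^{l,M}} interlaces the set of negative zeros of Be_n^φ; if M < 0, then the set of negative zeros of Be_n^φ interlaces the set of negative zeros of Be_n^{φ^{l,M}}. -/

import Mathlib

open Polynomial

/-- The Bell polynomials: `Bell 0 = 1`, `Bell (n+1) = x·(Bell n + (Bell n)')`. -/
noncomputable def Bell : ℕ → Polynomial ℝ
  | 0 => 1
  | n + 1 => X * (Bell n + derivative (Bell n))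

/-- `Phi φ n i` is the elementary symmetric polynomial of degree `i` in `φ 1, …, φ n`. -/
noncomputable def Phi (φ : ℕ → ℝ) (n i : ℕ) : ℝ :=
  ∑ s ∈ Finset.powersetCard i (Finset.Icc 1 n), ∏ j ∈ s, φ j

/-- The generalized Bell polynomial `Be_n^φ = ∑_{j=0}^n Φ^n_{n-j} Be_j`. -/
noncomputable def genBell (φ : ℕ → ℝ) (n : ℕ) : Polynomial ℝ :=
  ∑ j ∈ Finset.range (n + 1), C (Phi φ n (n - j)) * Bell j

/-- The sequence `φ^{{l}}` obtained from `φ` by removing its `l`-th term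
(sequences indexed from 1). -/
def removeIdx (φ : ℕ → ℝ) (l : ℕ) (i : ℕ) : ℝ := if i < l then φ i else φ (i + 1)

/-- The sequence `φ^{l,M}`, obtained by adding `M` to the `l`-th term of `φ`. -/
def addAt (φ : ℕ → ℝ) (l : ℕ) (M : ℝ) (i : ℕ) : ℝ := φ i + if i = l then M else 0

/-- A finite set `U` of reals interlaces a finite set `V` if between any two consecutive
elements of `U` there lies exactly one element of `V`, and either `|U| = |V| + 1`, or
`|U| = |V|` and `max U < max V`. -/
def Interlaces (U V : Finset ℝ) : Prop :=
  (∀ u₁ ∈ U, ∀ u₂ ∈ U, u₁ < u₂ → (∀ u ∈ U, ¬(u₁ < u ∧ u < u₂)) →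
    ∃! v, v ∈ V ∧ u₁ < v ∧ v < u₂) ∧
  (U.card = V.card + 1 ∨ (U.card = V.card ∧ U.max < V.max))

/-- `zeta φ n k` is the `k`-th zero (in increasing order, `k` counted from 1) of the
generalized Bell polynomial `Be_n^φ`. -/
noncomputable def zeta (φ : ℕ → ℝ) (n k : ℕ) : ℝ :=
  ((genBell φ n).roots.toFinset.sort (· ≤ ·)).getD (k - 1) 0


section aux
open Finset

/- sign of a product of nonzero reals -/
lemma sign_prod_aux (t : Finset ℕ) (f : ℕ → ℝ) (h0 : ∀ j ∈ t, f j ≠ 0) :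
    0 < (-1 : ℝ) ^ ((t.filter (fun j => f j < 0)).card) * ∏ j ∈ t, f j := by
  classical
  induction t using Finset.cons_induction with
  | empty => simp
  | cons a t ha ih =>
    have h0a : f a ≠ 0 := h0 a (Finset.mem_cons_self a t)
    have ih' := ih (fun j hj => h0 j (Finset.mem_cons_of_mem hj))
    rw [Finset.filter_cons, Finset.prod_cons]
    by_cases hfa : f a < 0
    · simp only [if_pos hfa]
      rw [Finset.card_cons, pow_succ]
      have : (-1:ℝ) ^ (t.filter (fun j => f j < 0)).card * -1 * (f a * ∏ j ∈ t, f j)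
          = (-f a) * ((-1:ℝ) ^ (t.filter (fun j => f j < 0)).card * ∏ j ∈ t, f j) := by ring
      rw [this]
      exact mul_pos (by linarith) ih'
    · simp only [if_neg hfa]
      have hfa' : 0 < f a := lt_of_le_of_ne (not_lt.mp hfa) (Ne.symm h0a)
      have : (-1:ℝ) ^ (t.filter (fun j => f j < 0)).card * (f a * ∏ j ∈ t, f j)
          = f a * ((-1:ℝ) ^ (t.filter (fun j => f j < 0)).card * ∏ j ∈ t, f j) := by ring
      rw [this]
      exact mul_pos hfa' ih'

lemma sign_clash {k : ℕ} {x : ℝ} (h1 : 0 < (-1:ℝ)^k * x) (h2 : 0 < (-1:ℝ)^(k+1) * x) : False := by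
  rw [pow_succ] at h2; nlinarith


lemma ivt_sign (F : Polynomial ℝ) {a b : ℝ} (hab : a < b) (k : ℕ)
    (ha : 0 < (-1:ℝ)^(k+1) * F.eval a) (hb : 0 < (-1:ℝ)^k * F.eval b) :
    ∃ x, a < x ∧ x < b ∧ F.eval x = 0 := by
  rcases Nat.even_or_odd k with hk | hk
  · have h1 : F.eval a < 0 := by
      have := hk.neg_one_pow (α := ℝ); rw [pow_succ, this] at ha; nlinarith
    have h2 : 0 < F.eval b := by have := hk.neg_one_pow (α := ℝ); rw [this] at hb; linarith
    have := intermediate_value_Ioo hab.le (Polynomial.continuousOn F (s := Set.Icc a b))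
    have h0 : (0:ℝ) ∈ Set.Ioo (F.eval a) (F.eval b) := ⟨h1, h2⟩
    obtain ⟨x, hx, hx0⟩ := this h0
    exact ⟨x, hx.1, hx.2, hx0⟩
  · have h1 : 0 < F.eval a := by
      have := hk.neg_one_pow (α := ℝ); rw [pow_succ, this] at ha; nlinarith
    have h2 : F.eval b < 0 := by have := hk.neg_one_pow (α := ℝ); rw [this] at hb; linarith
    have := intermediate_value_Ioo' hab.le (Polynomial.continuousOn F (s := Set.Icc a b))
    have h0 : (0:ℝ) ∈ Set.Ioo (F.eval b) (F.eval a) := ⟨h2, h1⟩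
    obtain ⟨x, hx, hx0⟩ := this h0
    exact ⟨x, hx.1, hx.2, hx0⟩

lemma chain_lt {g : ℕ → ℝ} {m : ℕ} (h : ∀ i, i + 1 ≤ m → g i < g (i+1)) :
    ∀ i j, i < j → j ≤ m → g i < g j := by
  intro i j hij hjm
  induction j with
  | zero => omega
  | succ j ih =>
    rcases Nat.lt_or_ge i j with h' | h'
    · exact (ih h' (by omega)).trans (h j hjm)
    · have : i = j := by omega
      subst this; exact h i hjm
lemma Phi_zero (φ : ℕ → ℝ) (n : ℕ) : Phi φ n 0 = 1 := by
  simp [Phi]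

lemma Phi_eq_zero (φ : ℕ → ℝ) {n i : ℕ} (h : n < i) : Phi φ n i = 0 := by
  have : (Finset.Icc 1 n).card < i := by rw [Nat.card_Icc]; omega
  rw [Phi, Finset.powersetCard_eq_empty.mpr this, Finset.sum_empty]

lemma Phi_congr {φ ψ : ℕ → ℝ} {n : ℕ} (i : ℕ) (h : ∀ j, 1 ≤ j → j ≤ n → φ j = ψ j) :
    Phi φ n i = Phi ψ n i := by
  refine Finset.sum_congr rfl fun s hs => Finset.prod_congr rfl fun j hj => ?_
  rw [Finset.mem_powersetCard] at hs
  have := hs.1 hj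
  rw [Finset.mem_Icc] at this
  exact h j this.1 this.2

lemma Phi_coeff (φ : ℕ → ℝ) {n i : ℕ} (h : i ≤ n) :
    Phi φ n i = (∏ j ∈ Finset.Icc 1 n, (X + C (φ j))).coeff (n - i) := by
  have hc : (Finset.Icc 1 n).card = n := by rw [Nat.card_Icc]; omega
  rw [Finset.prod_X_add_C_coeff _ _ (by omega : n - i ≤ (Finset.Icc 1 n).card)]
  rw [Phi, hc]
  congr 2
  omega

lemma prod_split (φ : ℕ → ℝ) {l n : ℕ} (hl : 1 ≤ l) (hln : l ≤ n) :
    ∏ j ∈ Finset.Icc 1 n, (X + C (φ j)) =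
      (X + C (φ l)) * ∏ j ∈ Finset.Icc 1 (n-1), (X + C (removeIdx φ l j)) := by
  have e_inj : Set.InjOn (fun j => if j < l then j else j + 1) (Finset.Icc 1 (n-1)) := by
    intro a _ b _ hab
    simp only at hab
    split_ifs at hab <;> omega
  have himg : (Finset.Icc 1 (n-1)).image (fun j => if j < l then j else j + 1)
      = Finset.Icc 1 n \ {l} := by
    ext j
    simp only [Finset.mem_image, Finset.mem_Icc, Finset.mem_sdiff, Finset.mem_singleton]
    constructor
    · rintro ⟨a, ⟨ha1, ha2⟩, rfl⟩
      split_ifs <;> omega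
    · rintro ⟨⟨h1, h2⟩, h3⟩
      rcases Nat.lt_or_ge j l with h' | h'
      · exact ⟨j, by omega, if_pos h'⟩
      · refine ⟨j - 1, by omega, ?_⟩
        rw [if_neg (by omega)]
        omega
  have hsplit : Finset.Icc 1 n = insert l (Finset.Icc 1 n \ {l}) := by
    ext j
    simp only [Finset.mem_insert, Finset.mem_sdiff, Finset.mem_singleton, Finset.mem_Icc]
    constructor
    · intro hj
      by_cases h' : j = l
      · exact Or.inl h'
      · exact Or.inr ⟨hj, h'⟩
    · rintro (rfl | ⟨hj, _⟩)
      · exact ⟨hl, hln⟩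
      · exact hj
  rw [hsplit, Finset.prod_insert (by simp)]
  congr 1
  rw [← himg, Finset.prod_image e_inj]
  refine Finset.prod_congr rfl fun j hj => ?_
  rw [removeIdx]
  split_ifs <;> rfl

lemma Phi_removeIdx (φ : ℕ → ℝ) {l n i : ℕ} (hl : 1 ≤ l) (hln : l ≤ n)
    (hi1 : 1 ≤ i) (hi2 : i ≤ n) :
    Phi φ n i = Phi (removeIdx φ l) (n-1) i + φ l * Phi (removeIdx φ l) (n-1) (i-1) := by
  have hn : 1 ≤ n := le_trans hl hln
  set B := ∏ j ∈ Finset.Icc 1 (n-1), (X + C (removeIdx φ l j)) with hB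
  have hA : Phi φ n i = ((X + C (φ l)) * B).coeff (n - i) := by
    rw [Phi_coeff φ hi2, prod_split φ hl hln]
  rw [hA, add_mul, mul_comm (C (φ l)) B, Polynomial.coeff_add, Polynomial.coeff_mul_C]
  by_cases hin : i = n
  · have h0 : n - i = 0 := by omega
    rw [h0, Polynomial.mul_coeff_zero, Polynomial.coeff_X_zero, zero_mul]
    rw [Phi_eq_zero (removeIdx φ l) (by omega : n - 1 < i)]
    rw [Phi_coeff (removeIdx φ l) (by omega : i - 1 ≤ n - 1)]
    have : n - 1 - (i - 1) = 0 := by omega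
    rw [this]
    ring
  · have hk : n - i = (n - i - 1) + 1 := by omega
    rw [hk, Polynomial.coeff_X_mul]
    rw [Phi_coeff (removeIdx φ l) (by omega : i ≤ n - 1)]
    rw [Phi_coeff (removeIdx φ l) (by omega : i - 1 ≤ n - 1)]
    have e1 : n - 1 - i = n - i - 1 := by omega
    have e2 : n - 1 - (i - 1) = (n - i - 1) + 1 := by omega
    rw [e1, e2, ← hk]
    ring

lemma genBell_congr {φ ψ : ℕ → ℝ} {n : ℕ} (h : ∀ j, 1 ≤ j → j ≤ n → φ j = ψ j) :
    genBell φ n = genBell ψ n := by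
  unfold genBell
  refine Finset.sum_congr rfl fun j _ => ?_
  rw [Phi_congr _ h]

lemma genBell_rec (φ : ℕ → ℝ) {l n : ℕ} (hl : 1 ≤ l) (hln : l ≤ n) :
    genBell φ n = X * (genBell (removeIdx φ l) (n-1) + derivative (genBell (removeIdx φ l) (n-1)))
      + C (φ l) * genBell (removeIdx φ l) (n-1) := by
  set ψ := removeIdx φ l with hψ
  obtain ⟨m, rfl⟩ : ∃ m, n = m + 1 := ⟨n-1, by omega⟩
  have hm1 : m + 1 - 1 = m := by omega
  rw [hm1]
  unfold genBell
  rw [derivative_sum]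
  have step1 : X * ((∑ j ∈ Finset.range (m + 1), C (Phi ψ m (m - j)) * Bell j) +
      ∑ j ∈ Finset.range (m+1), derivative (C (Phi ψ m (m - j)) * Bell j))
      = ∑ j ∈ Finset.range (m+1), C (Phi ψ m (m - j)) * Bell (j+1) := by
    rw [← Finset.sum_add_distrib, Finset.mul_sum]
    refine Finset.sum_congr rfl fun j _ => ?_
    rw [derivative_C_mul]
    show X * (C (Phi ψ m (m - j)) * Bell j + C (Phi ψ m (m - j)) * derivative (Bell j)) = _
    rw [show Bell (j+1) = X * (Bell j + derivative (Bell j)) from rfl]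
    ring
  rw [step1]
  have step2 : C (φ l) * ∑ j ∈ Finset.range (m + 1), C (Phi ψ m (m - j)) * Bell j
      = ∑ j ∈ Finset.range (m + 1), C (φ l * Phi ψ m (m - j)) * Bell j := by
    rw [Finset.mul_sum]
    refine Finset.sum_congr rfl fun j _ => ?_
    rw [C_mul]; ring
  rw [step2]
  rw [Finset.sum_range_succ' (fun j => C (Phi φ (m+1) (m + 1 - j)) * Bell j)]
  rw [Finset.sum_range_succ' (fun j => C (φ l * Phi ψ m (m - j)) * Bell j)]
  have hf0 : C (Phi φ (m+1) (m + 1 - 0)) * Bell 0 = C (φ l * Phi ψ m (m - 0)) * Bell 0 := by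
    congr 1
    rw [Nat.sub_zero, Nat.sub_zero]
    rw [Phi_removeIdx φ hl hln (by omega) (le_refl _), hm1]
    rw [Phi_eq_zero ψ (by omega : m < m + 1)]
    simp [hψ]
  rw [hf0]
  have key : ∑ j ∈ Finset.range (m+1), C (Phi φ (m+1) (m + 1 - (j+1))) * Bell (j+1)
      = ∑ j ∈ Finset.range (m+1), C (Phi ψ m (m - j)) * Bell (j+1)
        + ∑ j ∈ Finset.range m, C (φ l * Phi ψ m (m - (j+1))) * Bell (j+1) := by
    rw [Finset.sum_range_succ (fun j => C (Phi φ (m+1) (m + 1 - (j+1))) * Bell (j+1))]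
    rw [Finset.sum_range_succ (fun j => C (Phi ψ m (m - j)) * Bell (j+1))]
    have htop : C (Phi φ (m+1) (m + 1 - (m+1))) * Bell (m+1) = C (Phi ψ m (m - m)) * Bell (m+1) := by
      rw [Nat.sub_self, Nat.sub_self, Phi_zero, Phi_zero]
    rw [htop]
    have hmid : ∀ j ∈ Finset.range m, C (Phi φ (m+1) (m + 1 - (j+1))) * Bell (j+1)
        = C (Phi ψ m (m - j)) * Bell (j+1) + C (φ l * Phi ψ m (m - (j+1))) * Bell (j+1) := by
      intro j hj
      rw [Finset.mem_range] at hj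
      have e1 : m + 1 - (j + 1) = m - j := by omega
      rw [e1, Phi_removeIdx φ hl hln (by omega : 1 ≤ m - j) (by omega : m - j ≤ m + 1), hm1]
      have e2 : m - j - 1 = m - (j + 1) := by omega
      rw [e2, C_add, C_mul]
      ring
    rw [Finset.sum_congr rfl hmid, Finset.sum_add_distrib]
    ring
  rw [key]
  ring





noncomputable def prodRoots (r : ℕ → ℝ) (m : ℕ) : Polynomial ℝ :=
  ∏ i ∈ Finset.range m, (X - C (r i))

lemma prodRoots_monic (r : ℕ → ℝ) (m : ℕ) : (prodRoots r m).Monic :=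
  monic_prod_of_monic _ _ fun i _ => monic_X_sub_C (r i)

lemma prodRoots_natDegree (r : ℕ → ℝ) (m : ℕ) : (prodRoots r m).natDegree = m := by
  rw [prodRoots, natDegree_prod _ _ (fun i _ => X_sub_C_ne_zero (r i))]
  simp [natDegree_X_sub_C]

lemma prodRoots_eval (r : ℕ → ℝ) (m : ℕ) (x : ℝ) :
    (prodRoots r m).eval x = ∏ i ∈ Finset.range m, (x - r i) := by
  simp [prodRoots, eval_prod]

lemma prodRoots_eval_root (r : ℕ → ℝ) {m i : ℕ} (h : i < m) :
    (prodRoots r m).eval (r i) = 0 := by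
  rw [prodRoots, eval_prod]
  exact Finset.prod_eq_zero (Finset.mem_range.mpr h) (by simp)

/-- sign of a product over an interval cut -/
lemma prod_cut_sign (r : ℕ → ℝ) (m k : ℕ) (x : ℝ) (hk : k ≤ m)
    (hlow : ∀ j, j < k → r j < x) (hhigh : ∀ j, k ≤ j → j < m → x < r j) :
    0 < (-1:ℝ)^(m-k) * ∏ i ∈ Finset.range m, (x - r i) := by
  have h0 : ∀ j ∈ Finset.range m, x - r j ≠ 0 := by
    intro j hj
    rw [Finset.mem_range] at hj
    rcases Nat.lt_or_ge j k with h' | h'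
    · have := hlow j h'; intro hcc; nlinarith
    · have := hhigh j h' hj; intro hcc; nlinarith
  have := sign_prod_aux (Finset.range m) (fun j => x - r j) h0
  have hfil : (Finset.range m).filter (fun j => x - r j < 0) = Finset.Ico k m := by
    ext j
    simp only [Finset.mem_filter, Finset.mem_range, Finset.mem_Ico, sub_neg]
    constructor
    · rintro ⟨hj, hx⟩
      refine ⟨?_, hj⟩
      by_contra h'
      have := hlow j (by omega)
      linarith
    · rintro ⟨h1, h2⟩
      exact ⟨h2, hhigh j h1 h2⟩
  rw [hfil, Nat.card_Ico] at this
  exact this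

lemma eval_derivative_at_root (r : ℕ → ℝ) {m i : ℕ} (him : i < m) :
    (derivative (prodRoots r m)).eval (r i)
      = ∏ j ∈ (Finset.range m).erase i, (r i - r j) := by
  have hfact : prodRoots r m = (X - C (r i)) * ∏ j ∈ (Finset.range m).erase i, (X - C (r j)) :=
    (Finset.mul_prod_erase _ _ (Finset.mem_range.mpr him)).symm
  rw [hfact, derivative_mul, derivative_X_sub_C]
  rw [eval_add, eval_mul, eval_mul, eval_sub, eval_X, eval_C, sub_self, zero_mul, add_zero,
    eval_one, one_mul, eval_prod]
  simp

lemma packA' (m : ℕ) (r : ℕ → ℝ) (c : ℝ)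
    (hmono : ∀ i j, i < j → j < m → r i < r j)
    (hneg : ∀ i, i < m → r i < 0) (hc : 0 ≤ c) :
    ∃ s : ℕ → ℝ,
      (X * (prodRoots r m + derivative (prodRoots r m)) + C c * prodRoots r m
        = prodRoots s (m+1)) ∧
      (∀ i, i ≤ m → s i ≤ 0) ∧
      (∀ i, i < m → s i < r i ∧ r i < s (i+1)) ∧
      (0 < c → s m < 0) := by
  classical
  set Q := prodRoots r m with hQ
  set F := X * (Q + derivative Q) + C c * Q with hF
  rcases Nat.eq_zero_or_pos m with rfl | hm
  · refine ⟨fun _ => -c, ?_, ?_, ?_, ?_⟩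
    · have hQ1 : Q = 1 := by rw [hQ, prodRoots, Finset.range_zero, Finset.prod_empty]
      rw [hF, hQ1, prodRoots, Finset.prod_range_one]
      simp only [derivative_one, add_zero, mul_one]
      rw [map_neg, sub_neg_eq_add]
    · intro i hi; exact neg_nonpos.mpr hc
    · intro i hi; omega
    · intro h; simpa using h
  -- main case m ≥ 1
  have hQm : Q.Monic := prodRoots_monic r m
  have hQdeg : Q.natDegree = m := prodRoots_natDegree r m
  have hXQm : (X * Q).Monic := monic_X.mul hQm
  have hXQdeg : (X * Q).natDegree = m + 1 := by
    rw [natDegree_mul X_ne_zero hQm.ne_zero, natDegree_X, hQdeg]; omega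
  have hlowdeg : (X * derivative Q + C c * Q).natDegree ≤ m := by
    refine le_trans (natDegree_add_le _ _) (max_le ?_ ?_)
    · refine le_trans (natDegree_mul_le) ?_
      have := natDegree_derivative_le Q
      rw [natDegree_X, hQdeg] at *
      omega
    · refine le_trans (natDegree_mul_le) ?_
      rw [natDegree_C, hQdeg]
      omega
  have hdlt : (X * derivative Q + C c * Q).degree < (X * Q).degree := by
    rcases eq_or_ne (X * derivative Q + C c * Q) 0 with h0 | h0
    · rw [h0, degree_zero, degree_eq_natDegree hXQm.ne_zero, hXQdeg]
      exact WithBot.bot_lt_coe _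
    · rw [degree_eq_natDegree h0, degree_eq_natDegree hXQm.ne_zero, hXQdeg]
      exact_mod_cast lt_of_le_of_lt (Nat.cast_le.mpr hlowdeg)
        (Nat.cast_lt.mpr (by omega : m < m + 1))
  have hF_eq : F = X * Q + (X * derivative Q + C c * Q) := by rw [hF]; ring
  have hFm : F.Monic := by rw [hF_eq]; exact hXQm.add_of_left hdlt
  have hFdeg : F.natDegree = m + 1 := by
    rw [hF_eq, natDegree_add_eq_left_of_degree_lt hdlt, hXQdeg]
  have hFeval : ∀ x : ℝ, F.eval x = x * (Q.eval x + (derivative Q).eval x) + c * Q.eval x := by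
    intro x; rw [hF]; simp
  have hsign : ∀ i, i < m → 0 < (-1:ℝ)^(m-i) * F.eval (r i) := by
    intro i him
    have h1 : F.eval (r i) = r i * (derivative Q).eval (r i) := by
      rw [hFeval, prodRoots_eval_root r him]; ring
    rw [h1, eval_derivative_at_root r him]
    have hP := sign_prod_aux ((Finset.range m).erase i) (fun j => r i - r j) ?_
    · have hfil : ((Finset.range m).erase i).filter (fun j => r i - r j < 0)
          = Finset.Ico (i+1) m := by
        ext j
        simp only [Finset.mem_filter, Finset.mem_erase, Finset.mem_range, Finset.mem_Ico, sub_neg]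
        constructor
        · rintro ⟨⟨hne, hj⟩, hx⟩
          refine ⟨?_, hj⟩
          by_contra h'
          have hji : j < i := by omega
          have := hmono j i hji him
          linarith
        · rintro ⟨h1', h2'⟩
          exact ⟨⟨by omega, h2'⟩, hmono i j (by omega) h2'⟩
      rw [hfil, Nat.card_Ico] at hP
      have hri : r i < 0 := hneg i him
      have hexp : m - i = (m - (i+1)) + 1 := by omega
      rw [hexp, pow_succ]
      nlinarith
    · intro j hj
      rw [Finset.mem_erase, Finset.mem_range] at hj
      rcases Nat.lt_or_ge j i with h' | h'
      · have := hmono j i h' him; intro hcc; nlinarith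
      · have := hmono i j (by omega) hj.2; intro hcc; nlinarith
  have hQ0 : 0 < Q.eval 0 := by
    rw [hQ, prodRoots_eval]
    refine Finset.prod_pos fun i hi => ?_
    rw [Finset.mem_range] at hi
    have := hneg i hi; linarith
  have hF0 : F.eval 0 = c * Q.eval 0 := by rw [hFeval]; ring
  -- far left point
  have hfar : ∃ x0, x0 < r 0 ∧ 0 < (-1:ℝ)^(m+1) * F.eval x0 := by
    set G := F.comp (-X) with hG
    set H := C ((-1:ℝ)^(m+1)) * G with hH
    have hnX : (-X : Polynomial ℝ).natDegree = 1 := by simp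
    have hGdeg : G.natDegree = m + 1 := by
      rw [hG, natDegree_comp, hnX, hFdeg, mul_one]
    have hGlead : G.leadingCoeff = (-1:ℝ)^(m+1) := by
      rw [hG, leadingCoeff_comp (by rw [hnX]; omega), hFm.leadingCoeff, one_mul, hFdeg]
      simp [leadingCoeff]
    have hHlead : H.leadingCoeff = 1 := by
      rw [hH, leadingCoeff_mul, leadingCoeff_C, hGlead, ← pow_add]
      exact Even.neg_one_pow ⟨m+1, by ring⟩
    have hG0 : G ≠ 0 := by
      intro h; rw [h, natDegree_zero] at hGdeg; omega
    have hH0 : H ≠ 0 := by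
      intro h; rw [h, leadingCoeff_zero] at hHlead; norm_num at hHlead
    have hHdeg' : H.natDegree = m + 1 := by
      rw [hH, natDegree_C_mul (pow_ne_zero _ (by norm_num : (-1:ℝ) ≠ 0)), hGdeg]
    have hHdeg : 0 < H.degree := by
      rw [degree_eq_natDegree hH0, hHdeg']
      exact_mod_cast Nat.succ_pos m
    have htend := Polynomial.tendsto_atTop_of_leadingCoeff_nonneg H hHdeg (by rw [hHlead]; norm_num)
    have hev : ∀ᶠ x : ℝ in Filter.atTop, 0 < H.eval x := htend.eventually_gt_atTop 0
    have hev2 : ∀ᶠ x : ℝ in Filter.atTop, -r 0 < x := Filter.eventually_gt_atTop _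
    obtain ⟨x, hx1, hx2⟩ := (hev.and hev2).exists
    refine ⟨-x, by linarith, ?_⟩
    have : H.eval x = (-1:ℝ)^(m+1) * F.eval (-x) := by
      rw [hH, eval_mul, eval_C, hG, eval_comp]; simp
    rw [← this]; exact hx1
  have hex : ∀ i : ℕ, ∃ x : ℝ, i ≤ m →
      F.eval x = 0 ∧ (0 < i → r (i-1) < x) ∧ (i < m → x < r i) ∧ x ≤ 0 ∧ (i = m → 0 < c → x < 0) := by
    intro i
    rcases Nat.lt_or_ge i m with him | him
    · rcases Nat.eq_zero_or_pos i with rfl | hi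
      · obtain ⟨x0, hx0, hx0s⟩ := hfar
        have hb := hsign 0 hm
        rw [Nat.sub_zero] at hb
        obtain ⟨x, hx1, hx2, hx3⟩ := ivt_sign F hx0 m hx0s hb
        have hr0 : r 0 < 0 := hneg 0 hm
        exact ⟨x, fun _ => ⟨hx3, fun h => absurd h (by omega), fun _ => hx2,
          by linarith, fun h => absurd h (by omega)⟩⟩
      · have h1 := hsign (i-1) (by omega)
        have hexp : m - (i-1) = (m - i) + 1 := by omega
        rw [hexp] at h1
        obtain ⟨x, hx1, hx2, hx3⟩ := ivt_sign F (hmono (i-1) i (by omega) him) (m-i) h1 (hsign i him)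
        have hri : r i < 0 := hneg i him
        exact ⟨x, fun _ => ⟨hx3, fun _ => hx1, fun _ => hx2, by linarith,
          fun h => absurd h (by omega)⟩⟩
    · rcases eq_or_lt_of_le him with heq | hlt'
      · rcases lt_or_eq_of_le hc with hcpos | hceq
        · have h1 := hsign (m-1) (by omega)
          have hexp : m - (m-1) = 0 + 1 := by omega
          rw [hexp] at h1
          have hb : 0 < (-1:ℝ)^0 * F.eval 0 := by
            rw [pow_zero, one_mul, hF0]
            exact mul_pos hcpos hQ0
          obtain ⟨x, hx1, hx2, hx3⟩ := ivt_sign F (hneg (m-1) (by omega)) 0 h1 hb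
          refine ⟨x, fun _ => ⟨hx3, fun _ => ?_, fun h => absurd h (by omega), hx2.le,
            fun _ _ => hx2⟩⟩
          have : i - 1 = m - 1 := by omega
          rw [this]; exact hx1
        · refine ⟨0, fun _ => ⟨by rw [hF0, ← hceq]; ring, fun _ => ?_,
            fun h => absurd h (by omega), le_refl 0, fun _ hcp => absurd hcp (by rw [← hceq]; simp)⟩⟩
          have : i - 1 = m - 1 := by omega
          rw [this]; exact hneg (m-1) (by omega)
      · exact ⟨0, fun h => absurd h (by omega)⟩
  choose s hs using hex
  have hroot : ∀ i, i ≤ m → F.eval (s i) = 0 := fun i h => (hs i h).1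
  have hlt1 : ∀ i, i < m → s i < r i := fun i h => (hs i (le_of_lt h)).2.2.1 h
  have hlt2 : ∀ i, i < m → r i < s (i+1) := by
    intro i h
    have := (hs (i+1) (by omega)).2.1 (by omega)
    simpa using this
  have hle0 : ∀ i, i ≤ m → s i ≤ 0 := fun i h => (hs i h).2.2.2.1
  have hlast : 0 < c → s m < 0 := fun h => (hs m le_rfl).2.2.2.2 rfl h
  have hchain : ∀ i j, i < j → j ≤ m → s i < s j :=
    chain_lt (fun i h => lt_trans (hlt1 i (by omega)) (hlt2 i (by omega)))
  set T : Multiset ℝ := (Finset.range (m+1)).val.map s with hT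
  have hTnodup : T.Nodup := by
    refine Multiset.Nodup.map_on ?_ (Finset.range (m+1)).nodup
    intro a ha b hb hab
    rw [Finset.mem_val, Finset.mem_range] at ha hb
    rcases lt_trichotomy a b with h' | h' | h'
    · exact absurd hab (ne_of_lt (hchain a b h' (by omega)))
    · exact h'
    · exact absurd hab.symm (ne_of_lt (hchain b a h' (by omega)))
  have hTsub : T ≤ F.roots := by
    rw [Multiset.le_iff_count]
    intro a
    by_cases haT : a ∈ T
    · rw [Multiset.count_eq_one_of_mem hTnodup haT]
      rw [hT] at haT
      obtain ⟨i, hi, rfl⟩ := Multiset.mem_map.mp haT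
      rw [Finset.mem_val, Finset.mem_range] at hi
      have : s i ∈ F.roots := by
        rw [Polynomial.mem_roots hFm.ne_zero]
        exact hroot i (by omega)
      rwa [← Multiset.one_le_count_iff_mem] at this
    · rw [Multiset.count_eq_zero_of_notMem haT]
      exact Nat.zero_le _
  have hTcard : Multiset.card T = m + 1 := by
    rw [hT, Multiset.card_map]
    simp
  have hTeq : T = F.roots := by
    refine Multiset.eq_of_le_of_card_le hTsub ?_
    have := F.card_roots'
    rw [hFdeg] at this
    omega
  refine ⟨s, ?_, hle0, fun i h => ⟨hlt1 i h, hlt2 i h⟩, hlast⟩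
  have hprod := prod_multiset_X_sub_C_of_monic_of_roots_card_eq hFm
    (by rw [← hTeq, hTcard, hFdeg])
  rw [← hTeq, hT] at hprod
  rw [← hprod, prodRoots, Finset.prod_eq_multiset_prod, Multiset.map_map]
  rfl

lemma packA (m : ℕ) (r : ℕ → ℝ) (c : ℝ)
    (hmono : ∀ i j, i < j → j < m → r i < r j)
    (hneg : ∀ i, i < m → r i ≤ 0) (hc : 0 ≤ c) :
    ∃ s : ℕ → ℝ,
      (X * (prodRoots r m + derivative (prodRoots r m)) + C c * prodRoots r m
        = prodRoots s (m+1)) ∧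
      (∀ i, i ≤ m → s i ≤ 0) ∧
      (∀ i, i < m → s i < r i ∧ (r i < s (i+1) ∨ (r i = 0 ∧ s (i+1) = 0))) ∧
      (0 < c → (∀ i, i < m → r i < 0) → s m < 0) := by
  classical
  by_cases hall : ∀ i, i < m → r i < 0
  · obtain ⟨s, h1, h2, h3, h4⟩ := packA' m r c hmono hall hc
    exact ⟨s, h1, h2, fun i h => ⟨(h3 i h).1, Or.inl (h3 i h).2⟩, fun h _ => h4 h⟩
  · push_neg at hall
    obtain ⟨i0, hi0m, hi0⟩ := hall
    have hr00 : r i0 = 0 := le_antisymm (hneg i0 hi0m) hi0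
    have hi0top : i0 = m - 1 := by
      by_contra h
      have h1 : i0 + 1 < m := by omega
      have := hmono i0 (i0+1) (by omega) h1
      have := hneg (i0+1) h1
      linarith [hr00 ▸ this]
    obtain ⟨m', rfl⟩ : ∃ m', m = m' + 1 := ⟨m - 1, by omega⟩
    have hrm0 : r m' = 0 := by rw [← hr00]; congr 1; omega
    have hallneg : ∀ i, i < m' → r i < 0 := by
      intro i hi
      have := hmono i m' hi (by omega)
      rw [hrm0] at this
      exact this
    obtain ⟨s', h1', h2', h3', h4'⟩ := packA' m' r (c+1)
      (fun i j hij hj => hmono i j hij (by omega)) hallneg (by linarith)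
    set s : ℕ → ℝ := fun i => if i < m' + 1 then s' i else 0 with hsdef
    have hs_eq : ∀ i, i < m' + 1 → s i = s' i := fun i h => if_pos h
    have hs_top : s (m' + 1) = 0 := if_neg (by omega)
    have hs'top : s' m' < 0 := h4' (by linarith)
    have hQfact : prodRoots r (m' + 1) = prodRoots r m' * X := by
      rw [prodRoots, Finset.prod_range_succ, hrm0]
      rw [map_zero, sub_zero, prodRoots]
    have hsfact : prodRoots s (m' + 2) = prodRoots s' (m' + 1) * X := by
      rw [prodRoots, Finset.prod_range_succ, hs_top, map_zero, sub_zero, prodRoots]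
      congr 1
      exact Finset.prod_congr rfl fun i hi => by
        rw [hs_eq i (Finset.mem_range.mp hi)]
    refine ⟨s, ?_, ?_, ?_, ?_⟩
    · rw [hQfact, hsfact, ← h1']
      rw [derivative_mul, derivative_X, mul_one]
      have : C (c + 1) = C c + 1 := by rw [map_add, map_one]
      rw [this]
      ring
    · intro i hi
      rcases Nat.lt_or_ge i (m' + 1) with h | h
      · rw [hs_eq i h]; exact h2' i (by omega)
      · have : i = m' + 1 := by omega
        rw [this, hs_top]
    · intro i hi
      rcases Nat.lt_or_ge i m' with h | h
      · rw [hs_eq i (by omega), hs_eq (i+1) (by omega)]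
        exact ⟨(h3' i h).1, Or.inl (h3' i h).2⟩
      · have hieq : i = m' := by omega
        subst hieq
        rw [hs_eq i (by omega), hrm0]
        exact ⟨hs'top, Or.inr ⟨rfl, hs_top⟩⟩
    · intro _ hall'
      have := hall' m' (by omega)
      rw [hrm0] at this
      exact absurd this (lt_irrefl 0)

lemma prodRoots_roots (s : ℕ → ℝ) (m : ℕ) :
    (prodRoots s m).roots = (Finset.range m).val.map s := by
  rw [prodRoots, Finset.prod_eq_multiset_prod]
  have : Multiset.map (fun i => X - C (s i)) (Finset.range m).val
      = Multiset.map (fun a => X - C a) (Multiset.map s (Finset.range m).val) := by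
    rw [Multiset.map_map]
    rfl
  rw [this, roots_multiset_prod_X_sub_C]

lemma pack_compare (m : ℕ) (r sa sb : ℕ → ℝ) (a b : ℝ)
    (hmono : ∀ i j, i < j → j < m → r i < r j)
    (hab : a < b)
    (hpa : X * (prodRoots r m + derivative (prodRoots r m)) + C a * prodRoots r m
      = prodRoots sa (m+1))
    (hpb : X * (prodRoots r m + derivative (prodRoots r m)) + C b * prodRoots r m
      = prodRoots sb (m+1))
    (h3a : ∀ i, i < m → sa i < r i ∧ (r i < sa (i+1) ∨ (r i = 0 ∧ sa (i+1) = 0)))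
    (h3b : ∀ i, i < m → sb i < r i ∧ (r i < sb (i+1) ∨ (r i = 0 ∧ sb (i+1) = 0)))
    (i : ℕ) (him : i ≤ m) (hsa_neg : sa i < 0) :
    sb i < sa i := by
  set x := sa i with hx
  have hr_le_b : ∀ j, j < m → r j ≤ sb (j+1) := by
    intro j hj
    rcases (h3b j hj).2 with h | h
    · exact le_of_lt h
    · rw [h.1, h.2]
  have hchain_b : ∀ i' j', i' < j' → j' ≤ m → sb i' < sb j' :=
    chain_lt (fun i' h => lt_of_lt_of_le ((h3b i' (by omega)).1) (hr_le_b i' (by omega)))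
  -- r (i-1) < x and x < r i etc.
  have hlow : ∀ j, j < i → r j < x := by
    intro j hj
    have hj1 : j ≤ i - 1 := by omega
    have hi1m : i - 1 < m := by omega
    have h1 : r j ≤ r (i-1) := by
      rcases Nat.lt_or_ge j (i-1) with h | h
      · exact le_of_lt (hmono j (i-1) h hi1m)
      · have : j = i - 1 := by omega
        rw [this]
    have h2 : r (i-1) < x := by
      rcases (h3a (i-1) hi1m).2 with h | h
      · have : i - 1 + 1 = i := by omega
        rwa [this] at h
      · have : i - 1 + 1 = i := by omega
        rw [this] at h
        rw [hx] at *
        linarith [h.2, hsa_neg]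
    linarith
  have hhigh : ∀ j, i ≤ j → j < m → x < r j := by
    intro j hij hjm
    have h1 : x < r i := (h3a i (by omega)).1
    rcases Nat.lt_or_ge i j with h | h
    · exact lt_trans h1 (hmono i j h hjm)
    · have : i = j := by omega
      rw [← this]; exact h1
  have hQsign : 0 < (-1:ℝ)^(m-i) * (prodRoots r m).eval x := by
    rw [prodRoots_eval]
    exact prod_cut_sign r m i x him hlow hhigh
  have hQx : (prodRoots r m).eval x ≠ 0 := by
    intro h
    rw [h, mul_zero] at hQsign
    exact lt_irrefl 0 hQsign
  have hFab : prodRoots sb (m+1) = prodRoots sa (m+1) + C (b-a) * prodRoots r m := by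
    rw [← hpa, ← hpb, map_sub]
    ring
  have hPa0 : (prodRoots sa (m+1)).eval x = 0 := prodRoots_eval_root sa (by omega : i < m + 1)
  have hPbx : (prodRoots sb (m+1)).eval x = (b - a) * (prodRoots r m).eval x := by
    rw [hFab, eval_add, eval_mul, eval_C, hPa0, zero_add]
  have hPbsign : 0 < (-1:ℝ)^(m-i) * (prodRoots sb (m+1)).eval x := by
    rw [hPbx]
    have : (-1:ℝ)^(m-i) * ((b - a) * (prodRoots r m).eval x)
        = (b - a) * ((-1:ℝ)^(m-i) * (prodRoots r m).eval x) := by ring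
    rw [this]
    exact mul_pos (by linarith) hQsign
  rcases lt_trichotomy (sb i) x with h | h | h
  · exact h
  · exfalso
    have : (prodRoots sb (m+1)).eval x = 0 := by
      rw [← h]
      exact prodRoots_eval_root sb (by omega : i < m + 1)
    rw [this, mul_zero] at hPbsign
    exact lt_irrefl 0 hPbsign
  · exfalso
    have hlow' : ∀ j, j < i → sb j < x := by
      intro j hj
      exact lt_trans ((h3b j (by omega)).1) (hlow j hj)
    have hhigh' : ∀ j, i ≤ j → j < m + 1 → x < sb j := by
      intro j hij hjm
      rcases Nat.lt_or_ge i j with h' | h'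
      · have him' : i < m := by omega
        have h1 : x < sb (i+1) := lt_of_lt_of_le ((h3a i him').1) (hr_le_b i him')
        rcases Nat.lt_or_ge (i+1) j with h'' | h'' 
        · exact lt_trans h1 (hchain_b (i+1) j h'' (by omega))
        · have : i + 1 = j := by omega
          rwa [this] at h1
      · have : i = j := by omega
        rw [← this]; exact h
    have hsign2 := prod_cut_sign sb (m+1) i x (by omega) hlow' hhigh'
    rw [← prodRoots_eval] at hsign2
    have hexp : m + 1 - i = (m - i) + 1 := by omega
    rw [hexp] at hsign2
    exact sign_clash hPbsign hsign2


lemma filter_image_neg (s : ℕ → ℝ) (m : ℕ) (hneg : ∀ i, i < m → s i < 0) (K : ℕ)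
    (hK : K = if s m < 0 then m+1 else m) :
    ((Finset.range (m+1)).image s).filter (fun x => x < 0) = (Finset.range K).image s := by
  classical
  have hKm : m ≤ K := by rw [hK]; split <;> omega
  have hKm1 : K ≤ m + 1 := by rw [hK]; split <;> omega
  ext x
  simp only [Finset.mem_filter, Finset.mem_image, Finset.mem_range]
  constructor
  · rintro ⟨⟨i, hi, rfl⟩, hx⟩
    refine ⟨i, ?_, rfl⟩
    rcases Nat.lt_or_ge i m with h | h
    · omega
    · have : i = m := by omega
      subst this
      rw [hK, if_pos hx]
      omega
  · rintro ⟨i, hi, rfl⟩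
    constructor
    · exact ⟨i, by omega, rfl⟩
    · rcases Nat.lt_or_ge i m with h | h
      · exact hneg i h
      · have : i = m := by omega
        subst this
        rw [hK] at hi
        by_cases h' : s i < 0
        · exact h'
        · rw [if_neg h'] at hi; omega
  
lemma max_lt_max_of (U V : Finset ℝ) (w : ℝ) (hw : w ∈ V) (h : ∀ u ∈ U, u < w)
    (hUne : U.Nonempty) : U.max < V.max := by
  rw [← Finset.coe_max' hUne]
  have h1 : U.max' hUne < w := h _ (Finset.max'_mem U hUne)
  have h2 : (w : WithBot ℝ) ≤ V.max := Finset.le_max hw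
  exact lt_of_lt_of_le (WithBot.coe_lt_coe.mpr h1) h2

lemma interlace_main (m : ℕ) (r : ℕ → ℝ) (a b : ℝ)
    (hmono : ∀ i j, i < j → j < m → r i < r j)
    (hneg : ∀ i, i < m → r i ≤ 0)
    (ha : 0 ≤ a) (hab : a < b) :
    Interlaces
      ((X * (prodRoots r m + derivative (prodRoots r m)) + C b * prodRoots r m).roots.toFinset.filter
        (fun x => x < 0))
      ((X * (prodRoots r m + derivative (prodRoots r m)) + C a * prodRoots r m).roots.toFinset.filter
        (fun x => x < 0)) := by
  classical
  have hb : 0 ≤ b := by linarith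
  obtain ⟨sa, hpa, h2a, h3a, h4a⟩ := packA m r a hmono hneg ha
  obtain ⟨sb, hpb, h2b, h3b, h4b⟩ := packA m r b hmono hneg hb
  -- chains
  have hr_le_a : ∀ j, j < m → r j ≤ sa (j+1) := by
    intro j hj
    rcases (h3a j hj).2 with h | h
    · exact le_of_lt h
    · rw [h.1, h.2]
  have hr_le_b : ∀ j, j < m → r j ≤ sb (j+1) := by
    intro j hj
    rcases (h3b j hj).2 with h | h
    · exact le_of_lt h
    · rw [h.1, h.2]
  have hchain_a : ∀ i j, i < j → j ≤ m → sa i < sa j :=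
    chain_lt (fun i h => lt_of_lt_of_le ((h3a i (by omega)).1) (hr_le_a i (by omega)))
  have hchain_b : ∀ i j, i < j → j ≤ m → sb i < sb j :=
    chain_lt (fun i h => lt_of_lt_of_le ((h3b i (by omega)).1) (hr_le_b i (by omega)))
  have hle_a : ∀ i j, i ≤ j → j ≤ m → sa i ≤ sa j := by
    intro i j hij hjm
    rcases Nat.lt_or_ge i j with h | h
    · exact le_of_lt (hchain_a i j h hjm)
    · have : i = j := by omega
      rw [this]
  have hle_b : ∀ i j, i ≤ j → j ≤ m → sb i ≤ sb j := by
    intro i j hij hjm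
    rcases Nat.lt_or_ge i j with h | h
    · exact le_of_lt (hchain_b i j h hjm)
    · have : i = j := by omega
      rw [this]
  have hnegs_a : ∀ i, i < m → sa i < 0 := by
    intro i h
    have := (h3a i h).1
    have := hneg i h
    linarith
  have hnegs_b : ∀ i, i < m → sb i < 0 := by
    intro i h
    have := (h3b i h).1
    have := hneg i h
    linarith
  have hcmp : ∀ i, i ≤ m → sa i < 0 → sb i < sa i :=
    fun i him h => pack_compare m r sa sb a b hmono hab hpa hpb h3a h3b i him h
  have hcross : ∀ i, i < m → sa i < sb (i+1) :=
    fun i h => lt_of_lt_of_le ((h3a i h).1) (hr_le_b i h)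
  -- the root sets
  set Ka := if sa m < 0 then m + 1 else m with hKa
  set Kb := if sb m < 0 then m + 1 else m with hKb
  set U := (Finset.range Kb).image sb with hU
  set V := (Finset.range Ka).image sa with hV
  have hKam : m ≤ Ka := by rw [hKa]; split <;> omega
  have hKbm : m ≤ Kb := by rw [hKb]; split <;> omega
  have hKam1 : Ka ≤ m + 1 := by rw [hKa]; split <;> omega
  have hKbm1 : Kb ≤ m + 1 := by rw [hKb]; split <;> omega
  have hUeq : (X * (prodRoots r m + derivative (prodRoots r m))
      + C b * prodRoots r m).roots.toFinset.filter (fun x => x < 0) = U := by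
    rw [hpb, prodRoots_roots, Multiset.toFinset_map, Finset.val_toFinset]
    exact filter_image_neg sb m hnegs_b Kb hKb
  have hVeq : (X * (prodRoots r m + derivative (prodRoots r m))
      + C a * prodRoots r m).roots.toFinset.filter (fun x => x < 0) = V := by
    rw [hpa, prodRoots_roots, Multiset.toFinset_map, Finset.val_toFinset]
    exact filter_image_neg sa m hnegs_a Ka hKa
  rw [hUeq, hVeq]
  have hUneg : ∀ i, i < Kb → sb i < 0 := by
    intro i hi
    rcases Nat.lt_or_ge i m with h | h
    · exact hnegs_b i h
    · have him : i = m := by omega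
      subst him
      by_contra h'
      rw [hKb, if_neg h'] at hi
      omega
  have hVneg : ∀ i, i < Ka → sa i < 0 := by
    intro i hi
    rcases Nat.lt_or_ge i m with h | h
    · exact hnegs_a i h
    · have him : i = m := by omega
      subst him
      by_contra h'
      rw [hKa, if_neg h'] at hi
      omega
  have hUcard : U.card = Kb := by
    rw [hU, Finset.card_image_of_injOn, Finset.card_range]
    intro i hi j hj hij
    rw [Finset.coe_range, Set.mem_Iio] at hi hj
    rcases lt_trichotomy i j with h | h | h
    · exact absurd hij (ne_of_lt (hchain_b i j h (by omega)))
    · exact h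
    · exact absurd hij.symm (ne_of_lt (hchain_b j i h (by omega)))
  have hVcard : V.card = Ka := by
    rw [hV, Finset.card_image_of_injOn, Finset.card_range]
    intro i hi j hj hij
    rw [Finset.coe_range, Set.mem_Iio] at hi hj
    rcases lt_trichotomy i j with h | h | h
    · exact absurd hij (ne_of_lt (hchain_a i j h (by omega)))
    · exact h
    · exact absurd hij.symm (ne_of_lt (hchain_a j i h (by omega)))
  constructor
  · -- part 1 : unique interlacer between consecutive elements
    intro u₁ hu₁ u₂ hu₂ hlt hbetween
    obtain ⟨i₁, hi₁, rfl⟩ := Finset.mem_image.mp hu₁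
    obtain ⟨i₂, hi₂, rfl⟩ := Finset.mem_image.mp hu₂
    rw [Finset.mem_range] at hi₁ hi₂
    have hi12 : i₁ < i₂ := by
      by_contra h
      have : sb i₂ ≤ sb i₁ := hle_b i₂ i₁ (by omega) (by omega)
      linarith
    have hi2eq : i₂ = i₁ + 1 := by
      by_contra h
      have h5 : i₁ + 1 < i₂ := by omega
      refine hbetween (sb (i₁+1)) ?_ ⟨?_, ?_⟩
      · exact Finset.mem_image.mpr ⟨i₁+1, Finset.mem_range.mpr (by omega), rfl⟩
      · exact hchain_b i₁ (i₁+1) (by omega) (by omega)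
      · exact hchain_b (i₁+1) i₂ h5 (by omega)
    subst hi2eq
    have hi₁m : i₁ < m := by omega
    refine ⟨sa i₁, ⟨?_, ?_, ?_⟩, ?_⟩
    · exact Finset.mem_image.mpr ⟨i₁, Finset.mem_range.mpr (by omega), rfl⟩
    · exact hcmp i₁ (by omega) (hnegs_a i₁ hi₁m)
    · exact hcross i₁ hi₁m
    · rintro v ⟨hvV, hv1, hv2⟩
      obtain ⟨j, hj, rfl⟩ := Finset.mem_image.mp hvV
      rw [Finset.mem_range] at hj
      have hjeq : j = i₁ := by
        by_contra hne
        rcases Nat.lt_or_ge j i₁ with h | h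
        · have h1 : sa j < sb (j+1) := hcross j (by omega)
          have h2 : sb (j+1) ≤ sb i₁ := hle_b (j+1) i₁ (by omega) (by omega)
          linarith
        · have hji : i₁ + 1 ≤ j := by omega
          have hsale : sa (i₁ + 1) ≤ sa j := hle_a (i₁+1) j hji (by omega)
          have hsa1neg : sa (i₁ + 1) < 0 := by
            rcases Nat.lt_or_ge (i₁ + 1) m with h' | h'
            · exact hnegs_a (i₁+1) h'
            · have hj1 : j = i₁ + 1 := by omega
              have : sb (i₁ + 1) < 0 := hUneg (i₁+1) (by omega)
              rw [← hj1]
              linarith [hv2, hj1 ▸ this]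
          have := hcmp (i₁+1) (by omega) hsa1neg
          linarith
      rw [hjeq]
  · -- part 2 : cardinalities
    have hKbpos : 1 ≤ Kb := by
      by_contra h
      have hm0 : m = 0 := by omega
      have hx : sb m < 0 := h4b (by linarith) (fun i hi => absurd hi (by omega))
      have hKb0 : Kb = 0 := by omega
      rw [hKb, if_pos hx] at hKb0
      omega
    have hUne : U.Nonempty := by
      exact ⟨sb 0, Finset.mem_image.mpr ⟨0, Finset.mem_range.mpr (by omega), rfl⟩⟩
    rcases lt_or_eq_of_le (h2a m (le_refl m)) with hsam | hsam
    · -- sa m < 0 : both have m+1 elements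
      have hsbm : sb m < sa m := hcmp m le_rfl hsam
      have hKa1 : Ka = m + 1 := by rw [hKa, if_pos hsam]
      have hKb1 : Kb = m + 1 := by rw [hKb, if_pos (by linarith : sb m < 0)]
      refine Or.inr ⟨by rw [hUcard, hVcard, hKa1, hKb1], ?_⟩
      refine max_lt_max_of U V (sa m) ?_ ?_ hUne
      · exact Finset.mem_image.mpr ⟨m, Finset.mem_range.mpr (by omega), rfl⟩
      · intro u hu
        obtain ⟨i, hi, rfl⟩ := Finset.mem_image.mp hu
        rw [Finset.mem_range] at hi
        have : sb i ≤ sb m := hle_b i m (by omega) le_rfl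
        linarith
    · -- sa m = 0
      have hKa1 : Ka = m := by rw [hKa, if_neg (by rw [hsam]; exact lt_irrefl 0)]
      by_cases hsbm : sb m < 0
      · have hKb1 : Kb = m + 1 := by rw [hKb, if_pos hsbm]
        exact Or.inl (by rw [hUcard, hVcard, hKa1, hKb1])
      · have hKb1 : Kb = m := by rw [hKb, if_neg hsbm]
        have hm1 : 1 ≤ m := by
          by_contra h
          have hm0 : m = 0 := by omega
          have : sb m < 0 := by
            apply h4b (by linarith)
            intro i hi
            omega
          exact hsbm this
        refine Or.inr ⟨by rw [hUcard, hVcard, hKa1, hKb1], ?_⟩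
        refine max_lt_max_of U V (sa (m-1)) ?_ ?_ hUne
        · exact Finset.mem_image.mpr ⟨m-1, Finset.mem_range.mpr (by omega), rfl⟩
        · intro u hu
          obtain ⟨i, hi, rfl⟩ := Finset.mem_image.mp hu
          rw [Finset.mem_range] at hi
          have h1 : sb i ≤ sb (m-1) := hle_b i (m-1) (by omega) (by omega)
          have h2 : sb (m-1) < sa (m-1) := hcmp (m-1) (by omega) (hnegs_a (m-1) (by omega))
          linarith
  
lemma genBell_prodRoots : ∀ (m : ℕ) (ψ : ℕ → ℝ), (∀ i, 1 ≤ i → i ≤ m → 0 ≤ ψ i) →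
    ∃ r : ℕ → ℝ, (∀ i j, i < j → j < m → r i < r j) ∧ (∀ i, i < m → r i ≤ 0) ∧
      genBell ψ m = prodRoots r m := by
  intro m
  induction m with
  | zero =>
    intro ψ _
    refine ⟨fun _ => 0, by omega, by omega, ?_⟩
    rw [genBell, prodRoots, Finset.range_zero, Finset.prod_empty, Finset.sum_range_one]
    rw [Nat.sub_zero, Phi_zero]
    show C 1 * Bell 0 = 1
    rw [map_one, one_mul]
    rfl
  | succ m ih =>
    intro ψ hψ
    obtain ⟨r, hr1, hr2, hreq⟩ := ih ψ (fun i h1 h2 => hψ i h1 (by omega))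
    have hrec := genBell_rec ψ (l := m+1) (by omega) (le_refl (m+1))
    rw [Nat.add_sub_cancel] at hrec
    have hGeq : genBell (removeIdx ψ (m+1)) m = genBell ψ m := by
      apply genBell_congr
      intro j h1 h2
      rw [removeIdx, if_pos (by omega)]
    obtain ⟨s, hs1, hs2, hs3, _⟩ := packA m r (ψ (m+1)) hr1 hr2 (hψ (m+1) (by omega) (le_refl _))
    refine ⟨s, ?_, ?_, ?_⟩
    · intro i j hij hj
      refine chain_lt (m := m) (g := s) ?_ i j hij (by omega)
      intro i' hi'
      have h1 := (hs3 i' (by omega)).1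
      rcases (hs3 i' (by omega)).2 with h | h
      · linarith
      · rw [h.2]; rw [h.1] at h1; linarith
    · intro i hi
      exact hs2 i (by omega)
    · rw [hrec, hGeq, hreq, hs1]

end aux

/-- for `φ_i ≥ 0`, `1 ≤ l ≤ n` and `M ≠ 0` with `M > −φ_l`: if `M > 0` the
negative zeros of `Be_n^{φ^{l,M}}` interlace the negative zeros of `Be_n^φ`; if `M < 0`
the negative zeros of `Be_n^φ` interlace the negative zeros of `Be_n^{φ^{l,M}}`. -/
theorem genBell_addAt_interlace (φ : ℕ → ℝ) (hφ : ∀ i, 1 ≤ i → 0 ≤ φ i)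
    (l n : ℕ) (hl : 1 ≤ l) (hln : l ≤ n) (M : ℝ) (hM : M ≠ 0) (hMφ : -φ l < M) :
    (0 < M → Interlaces ((genBell (addAt φ l M) n).roots.toFinset.filter (fun x => x < 0))
      ((genBell φ n).roots.toFinset.filter (fun x => x < 0))) ∧
    (M < 0 → Interlaces ((genBell φ n).roots.toFinset.filter (fun x => x < 0))
      ((genBell (addAt φ l M) n).roots.toFinset.filter (fun x => x < 0))) := by
  have hψpos : ∀ i, 1 ≤ i → i ≤ n - 1 → 0 ≤ removeIdx φ l i := by
    intro i h1 _
    rw [removeIdx]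
    split_ifs
    · exact hφ i h1
    · exact hφ (i+1) (by omega)
  obtain ⟨r, hr1, hr2, hreq⟩ := genBell_prodRoots (n-1) (removeIdx φ l) hψpos
  have e1 : genBell φ n = X * (prodRoots r (n-1) + derivative (prodRoots r (n-1)))
      + C (φ l) * prodRoots r (n-1) := by
    rw [genBell_rec φ hl hln, hreq]
  have hrem : removeIdx (addAt φ l M) l = removeIdx φ l := by
    funext i
    rw [removeIdx, removeIdx]
    by_cases h : i < l
    · rw [if_pos h, if_pos h, addAt, if_neg (by omega)]
      ring
    · rw [if_neg h, if_neg h, addAt, if_neg (by omega)]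
      ring
  have haddl : addAt φ l M l = φ l + M := by rw [addAt, if_pos rfl]
  have e2 : genBell (addAt φ l M) n = X * (prodRoots r (n-1) + derivative (prodRoots r (n-1)))
      + C (φ l + M) * prodRoots r (n-1) := by
    rw [genBell_rec (addAt φ l M) hl hln, hrem, hreq, haddl]
  constructor
  · intro hMpos
    rw [e1, e2]
    exact interlace_main (n-1) r (φ l) (φ l + M) hr1 hr2 (hφ l hl) (by linarith)
  · intro hMneg
    rw [e1, e2]
    exact interlace_main (n-1) r (φ l + M) (φ l) hr1 hr2 (by linarith) (by linarith)
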